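/- Let g and h be complex metric Lie algebras. Then the partition function of a connected cubic graph with respect to the structure tensor of the direct sum g ⊕ h equals the sum of the partition functions with respect to the summands: p_{c_{g ⊕ h}}(G) = p_{c_g}(G) + p_{c_h}(G) for every connected cubic graph G with at least one vertex. -/

import Mathlib

/-- The partition function of a cubic graph with rotation system `ι`. -/
noncomputable def partitionFun {V E : Type*} [Fintype V] [Fintype E] [DecidableEq E]
    (ι : V → Fin 3 → E) {n : ℕ} (c : Fin n → Fin n → Fin n → ℂ) : ℂ :=
  ∑ ψ : E → Fin n, ∏ v, c (ψ (ι v 0)) (ψ (ι v 1)) (ψ (ι v 2))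

/-- The direct-sum (block) 3-tensor of two 3-tensors: entries mixing the two
blocks vanish. -/
noncomputable def dsTensor {m n : ℕ} (c : Fin m → Fin m → Fin m → ℂ)
    (d : Fin n → Fin n → Fin n → ℂ) :
    (Fin m ⊕ Fin n) → (Fin m ⊕ Fin n) → (Fin m ⊕ Fin n) → ℂ
  | Sum.inl i, Sum.inl j, Sum.inl k => c i j k
  | Sum.inr i, Sum.inr j, Sum.inr k => d i j k
  | _, _, _ => 0

lemma dsTensor_eq_zero {m n : ℕ} (c : Fin m → Fin m → Fin m → ℂ)
    (d : Fin n → Fin n → Fin n → ℂ) (x y z : Fin m ⊕ Fin n)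
    (h1 : ¬ (x.isLeft = true ∧ y.isLeft = true ∧ z.isLeft = true))
    (h2 : ¬ (x.isRight = true ∧ y.isRight = true ∧ z.isRight = true)) :
    dsTensor c d x y z = 0 := by
  rcases x with i | i <;> rcases y with j | j <;> rcases z with k | k <;>
    simp_all [dsTensor]

/-- For a connected cubic graph `G` (with at least one vertex), the partition
function with respect to the structure tensor of a direct sum of two metric Lie
algebras equals the sum of the partition functions of the summands. -/
theorem partitionFun_direct_sum
    {gA : Type*} [LieRing gA] [LieAlgebra ℂ gA] [FiniteDimensional ℂ gA]
    {gB : Type*} [LieRing gB] [LieAlgebra ℂ gB] [FiniteDimensional ℂ gB]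
    (BA : LinearMap.BilinForm ℂ gA) (BB : LinearMap.BilinForm ℂ gB)
    (hsymmA : ∀ x y : gA, BA x y = BA y x) (hndA : BA.Nondegenerate)
    (hinvA : ∀ x y z : gA, BA ⁅x, y⁆ z = BA x ⁅y, z⁆)
    (hsymmB : ∀ x y : gB, BB x y = BB y x) (hndB : BB.Nondegenerate)
    (hinvB : ∀ x y z : gB, BB ⁅x, y⁆ z = BB x ⁅y, z⁆)
    {m n : ℕ} (bA : Module.Basis (Fin m) ℂ gA) (bB : Module.Basis (Fin n) ℂ gB)
    (horthA : ∀ i j, BA (bA i) (bA j) = if i = j then 1 else 0)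
    (horthB : ∀ i j, BB (bB i) (bB j) = if i = j then 1 else 0)
    (c : Fin m → Fin m → Fin m → ℂ) (d : Fin n → Fin n → Fin n → ℂ)
    (hc : ∀ i j k, c i j k = BA ⁅bA i, bA j⁆ (bA k))
    (hd : ∀ i j k, d i j k = BB ⁅bB i, bB j⁆ (bB k))
    {V E : Type*} [Fintype V] [Fintype E] [DecidableEq E] [Nonempty V]
    (ι : V → Fin 3 → E)
    (hcubic : ∀ e : E,
      (Finset.univ.filter (fun p : V × Fin 3 => ι p.1 p.2 = e)).card = 2)
    (hconn : ∀ v w : V,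
      Relation.ReflTransGen (fun a b : V => ∃ s t : Fin 3, ι a s = ι b t) v w) :
    (∑ ψ : E → (Fin m ⊕ Fin n),
        ∏ v, dsTensor c d (ψ (ι v 0)) (ψ (ι v 1)) (ψ (ι v 2)))
      = partitionFun ι c + partitionFun ι d := by
  classical
  -- every edge is incident to some vertex
  have hinc : ∀ e : E, ∃ v s, ι v s = e := by
    intro e
    have h2 := hcubic e
    have hne : (Finset.univ.filter (fun p : V × Fin 3 => ι p.1 p.2 = e)).Nonempty := by
      rw [← Finset.card_pos, h2]; norm_num
    obtain ⟨⟨v, s⟩, hp⟩ := hne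
    exact ⟨v, s, (Finset.mem_filter.mp hp).2⟩
  have hEne : Nonempty E := ⟨ι (Classical.arbitrary V) 0⟩
  set F : (E → Fin m ⊕ Fin n) → ℂ :=
    fun ψ => ∏ v, dsTensor c d (ψ (ι v 0)) (ψ (ι v 1)) (ψ (ι v 2)) with hF
  set P : (E → Fin m ⊕ Fin n) → Prop := fun ψ => ∀ e, (ψ e).isLeft = true with hP
  set Q : (E → Fin m ⊕ Fin n) → Prop := fun ψ => ∀ e, (ψ e).isRight = true with hQ
  -- mixed colorings contribute zero
  have key : ∀ ψ : E → Fin m ⊕ Fin n, ¬ P ψ → ¬ Q ψ → F ψ = 0 := by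
    intro ψ hL hR
    by_cases hhom : ∀ v : V, (∀ i : Fin 3, (ψ (ι v i)).isLeft = true) ∨
        (∀ i : Fin 3, (ψ (ι v i)).isRight = true)
    · exfalso
      -- each vertex has a uniform side, so the side is locally constant
      have hside : ∀ (v : V) (i : Fin 3), (ψ (ι v i)).isLeft = (ψ (ι v 0)).isLeft := by
        intro v i
        rcases hhom v with h | h
        · rw [h i, h 0]
        · have h1 := h i; have h2 := h 0
          cases hx : ψ (ι v i) <;> cases hy : ψ (ι v 0) <;> simp_all
      have hstep : ∀ a b : V, (∃ s t : Fin 3, ι a s = ι b t) →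
          (ψ (ι a 0)).isLeft = (ψ (ι b 0)).isLeft := by
        rintro a b ⟨s, t, hst⟩
        rw [← hside a s, hst, hside b t]
      have hconst : ∀ a b : V, (ψ (ι a 0)).isLeft = (ψ (ι b 0)).isLeft := by
        intro a b
        induction hconn a b with
        | refl => rfl
        | tail _ h ih => exact ih.trans (hstep _ _ h)
      simp only [hP, not_forall] at hL
      simp only [hQ, not_forall] at hR
      obtain ⟨e₁, he₁⟩ := hL
      obtain ⟨e₂, he₂⟩ := hR
      obtain ⟨v₁, s₁, hv₁⟩ := hinc e₁
      obtain ⟨v₂, s₂, hv₂⟩ := hinc e₂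
      -- (ψ e₁).isLeft = false, (ψ e₂).isLeft = true, but the side is constant
      have hL1 : (ψ e₁).isLeft = false := by
        cases hx : ψ e₁ <;> simp_all
      have hL2 : (ψ e₂).isLeft = true := by
        cases hx : ψ e₂ <;> simp_all
      have : (ψ e₁).isLeft = (ψ e₂).isLeft := by
        rw [← hv₁, ← hv₂, hside v₁ s₁, hside v₂ s₂]
        exact hconst v₁ v₂
      rw [hL1, hL2] at this
      exact Bool.noConfusion this
    · push_neg at hhom
      obtain ⟨v, hv1, hv2⟩ := hhom
      refine Finset.prod_eq_zero (Finset.mem_univ v) ?_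
      apply dsTensor_eq_zero
      · rintro ⟨h0, h1, h2⟩
        obtain ⟨i, hi⟩ := hv1
        exact hi (by fin_cases i <;> assumption)
      · rintro ⟨h0, h1, h2⟩
        obtain ⟨i, hi⟩ := hv2
        exact hi (by fin_cases i <;> assumption)
  -- split the sum
  have hsplit : ∑ ψ : E → Fin m ⊕ Fin n, F ψ =
      (∑ ψ ∈ Finset.univ.filter P, F ψ) + ∑ ψ ∈ Finset.univ.filter Q, F ψ := by
    rw [← Finset.sum_filter_add_sum_filter_not Finset.univ P F]
    congr 1
    rw [← Finset.sum_filter_add_sum_filter_not (Finset.univ.filter fun ψ => ¬ P ψ) Q F,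
      Finset.filter_filter, Finset.filter_filter]
    have h0 : ∑ ψ ∈ Finset.univ.filter (fun ψ => ¬ P ψ ∧ ¬ Q ψ), F ψ = 0 := by
      refine Finset.sum_eq_zero fun ψ hψ => ?_
      obtain ⟨h1, h2⟩ := (Finset.mem_filter.mp hψ).2
      exact key ψ h1 h2
    rw [h0, add_zero]
    congr 1
    ext ψ
    simp only [Finset.mem_filter, Finset.mem_univ, true_and]
    constructor
    · exact And.right
    · intro hq
      refine ⟨fun hp => ?_, hq⟩
      obtain ⟨e⟩ := hEne
      have := hp e; have := hq e
      cases hx : ψ e <;> simp_all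
  rw [hsplit]
  congr 1
  · -- left block
    unfold partitionFun
    refine Finset.sum_bij' (i := fun ψ hψ => fun e => (ψ e).getLeft ?_)
      (j := fun φ _ => fun e => Sum.inl (φ e)) ?_ ?_ ?_ ?_ ?_
    · exact (Finset.mem_filter.mp hψ).2 e
    · intro a ha; exact Finset.mem_univ _
    · intro a ha
      simp only [Finset.mem_filter, Finset.mem_univ, true_and, hP]
      intro e; rfl
    · intro a ha
      funext e
      exact Sum.inl_getLeft _ _
    · intro a ha
      funext e; rfl
    · intro ψ hψ
      have hψ' := (Finset.mem_filter.mp hψ).2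
      simp only [hF]
      refine Finset.prod_congr rfl fun v _ => ?_
      obtain ⟨a0, ha0⟩ := Sum.isLeft_iff.mp (hψ' (ι v 0))
      obtain ⟨a1, ha1⟩ := Sum.isLeft_iff.mp (hψ' (ι v 1))
      obtain ⟨a2, ha2⟩ := Sum.isLeft_iff.mp (hψ' (ι v 2))
      rw [(Sum.getLeft_eq_iff _).mpr ha0, (Sum.getLeft_eq_iff _).mpr ha1,
        (Sum.getLeft_eq_iff _).mpr ha2, ha0, ha1, ha2]
      rfl
  · -- right block
    unfold partitionFun
    refine Finset.sum_bij' (i := fun ψ hψ => fun e => (ψ e).getRight ?_)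
      (j := fun φ _ => fun e => Sum.inr (φ e)) ?_ ?_ ?_ ?_ ?_
    · exact (Finset.mem_filter.mp hψ).2 e
    · intro a ha; exact Finset.mem_univ _
    · intro a ha
      simp only [Finset.mem_filter, Finset.mem_univ, true_and, hQ]
      intro e; rfl
    · intro a ha
      funext e
      exact Sum.inr_getRight _ _
    · intro a ha
      funext e; rfl
    · intro ψ hψ
      have hψ' := (Finset.mem_filter.mp hψ).2
      simp only [hF]
      refine Finset.prod_congr rfl fun v _ => ?_
      obtain ⟨a0, ha0⟩ := Sum.isRight_iff.mp (hψ' (ι v 0))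
      obtain ⟨a1, ha1⟩ := Sum.isRight_iff.mp (hψ' (ι v 1))
      obtain ⟨a2, ha2⟩ := Sum.isRight_iff.mp (hψ' (ι v 2))
      rw [(Sum.getRight_eq_iff _).mpr ha0, (Sum.getRight_eq_iff _).mpr ha1,
        (Sum.getRight_eq_iff _).mpr ha2, ha0, ha1, ha2]
      rfl
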